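/- Let φ be a 3CNF formula with n > 0 variables and m > 0 clauses, each clause a disjunction of exactly three literals over pairwise distinct variables, and let k > 0 be an integer and γ ∈ (0, 1/8) a rational. Then: (1) if φ is satisfiable, then |rep(db_k(φ), Σ)| ≥ 2^{k·m}; and (2) if every truth assignment of φ makes at most (7/8 + γ)·m of the clauses of φ true, then |rep(db_k(φ), Σ)| ≤ 2^n · 2^{(7/8 + γ)·k·m}. -/

import Mathlib

open scoped Classical

/-- A fact over relation name `rel`, assigning a constant to each attribute. -/
structure DBFact (Rel Attr Const : Type*) where
  rel : Rel
  val : Attr → Const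

/-- A functional dependency `rel : lhs → rhs`. -/
structure DBFD (Rel Attr : Type*) where
  rel : Rel
  lhs : Set Attr
  rhs : Set Attr

/-- A term of a conjunctive query: a variable or a constant. -/
inductive DBTerm (Var Const : Type*) where
  | var : Var → DBTerm Var Const
  | const : Const → DBTerm Var Const

/-- An atom of a conjunctive query. -/
structure DBAtom (Rel Attr Var Const : Type*) where
  rel : Rel
  val : Attr → DBTerm Var Const

variable {Rel Attr Var Const : Type*}

/-- A database satisfies a single FD. -/
def satFD (D : Finset (DBFact Rel Attr Const)) (φ : DBFD Rel Attr) : Prop :=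
  ∀ f ∈ D, ∀ g ∈ D, f.rel = φ.rel → g.rel = φ.rel →
    (∀ A ∈ φ.lhs, f.val A = g.val A) → ∀ A ∈ φ.rhs, f.val A = g.val A

/-- A database satisfies a set of FDs. -/
def satFDs (D : Finset (DBFact Rel Attr Const)) (S : Set (DBFD Rel Attr)) : Prop :=
  ∀ φ ∈ S, satFD D φ

/-- `E` is a repair of `D` w.r.t. `S`: an inclusion-maximal consistent subset of `D`. -/
def isRepair (S : Set (DBFD Rel Attr)) (D E : Finset (DBFact Rel Attr Const)) : Prop :=
  E ⊆ D ∧ satFDs E S ∧ ∀ F, E ⊆ F → F ⊆ D → satFDs F S → F = E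

/-- The set of repairs of `D` w.r.t. `S`. -/
noncomputable def rep (D : Finset (DBFact Rel Attr Const)) (S : Set (DBFD Rel Attr)) :
    Finset (Finset (DBFact Rel Attr Const)) :=
  D.powerset.filter (fun E => isRepair S D E)

/-- Applying a homomorphism (a map from variables to constants) to an atom yields a fact. -/
def applyHom (h : Var → Const) (α : DBAtom Rel Attr Var Const) : DBFact Rel Attr Const :=
  ⟨α.rel, fun A => match α.val A with
    | DBTerm.var v => h v
    | DBTerm.const c => c⟩

/-- `D ⊨ Q`: there is a homomorphism from the CQ `Q` into `D`. -/
def entails (D : Finset (DBFact Rel Attr Const)) (Q : Finset (DBAtom Rel Attr Var Const)) :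
    Prop :=
  ∃ h : Var → Const, ∀ α ∈ Q, applyHom h α ∈ D

/-- The repairs of `D` w.r.t. `S` that entail `Q`. -/
noncomputable def repQ (D : Finset (DBFact Rel Attr Const)) (S : Set (DBFD Rel Attr))
    (Q : Finset (DBAtom Rel Attr Var Const)) : Finset (Finset (DBFact Rel Attr Const)) :=
  (rep D S).filter (fun E => entails E Q)

/-- The relative frequency of `Q` w.r.t. `D` and `S`. -/
noncomputable def rfreq (Q : Finset (DBAtom Rel Attr Var Const))
    (D : Finset (DBFact Rel Attr Const)) (S : Set (DBFD Rel Attr)) : ℚ :=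
  ((repQ D S Q).card : ℚ) / ((rep D S).card : ℚ)

/-- `Q` is self-join-free: no relation name occurs in two distinct atoms. -/
def sjf (Q : Finset (DBAtom Rel Attr Var Const)) : Prop :=
  ∀ α ∈ Q, ∀ β ∈ Q, α.rel = β.rel → α = β

/-- A canonical set of FDs with an LHS chain, given by the chain
`R : X₁ → Y₁, …, R : Xₙ → Yₙ` for each relation name `R`, with
`X₁ ⊊ X₂ ⊊ ⋯ ⊊ Xₙ`, each `Y_i` nonempty, `X_i ∩ Y_j = ∅` for all `i,j`,
and `Y_i ∩ Y_j = ∅` for `i ≠ j`. -/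
def canonicalChain (chain : Rel → List (Set Attr × Set Attr)) : Prop :=
  ∀ R : Rel,
    ((chain R).Pairwise fun a b => a.1 ⊂ b.1) ∧
    (∀ xy ∈ chain R, (xy.2 : Set Attr).Nonempty) ∧
    (∀ xy ∈ chain R, ∀ xy' ∈ chain R, xy.1 ∩ xy'.2 = ∅) ∧
    ((chain R).Pairwise fun a b => a.2 ∩ b.2 = ∅)

/-- The set of FDs induced by a chain. -/
def chainFDs (chain : Rel → List (Set Attr × Set Attr)) : Set (DBFD Rel Attr) :=
  {φ | ∃ xy ∈ chain φ.rel, φ.lhs = xy.1 ∧ φ.rhs = xy.2}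

/-- The `i`-th FD of the chain `L` has some attribute carrying a variable in atom `α`. -/
def chainVarAt (L : List (Set Attr × Set Attr)) (α : DBAtom Rel Attr Var Const) (i : ℕ) :
    Prop :=
  ∃ xy, L[i]? = some xy ∧ ∃ A ∈ xy.1 ∪ xy.2, ∃ v, α.val A = DBTerm.var v

/-- The index of the primary FD of the chain `L` w.r.t. the atom `α` (if it exists):
the first FD some of whose attributes carries a variable in `α`. -/
noncomputable def primaryIdx (L : List (Set Attr × Set Attr))
    (α : DBAtom Rel Attr Var Const) : Option ℕ :=
  if h : ∃ i, chainVarAt L α i then some (Nat.find h) else none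

/-- The primary FD of the chain `L` w.r.t. the atom `α` (if it exists). -/
noncomputable def primaryFD (L : List (Set Attr × Set Attr))
    (α : DBAtom Rel Attr Var Const) : Option (Set Attr × Set Attr) :=
  (primaryIdx L α).bind fun i => L[i]?

/-- The primary prefix of the chain `L` w.r.t. the atom `α`: the FDs strictly before the
primary FD, or the whole chain if there is no primary FD. -/
noncomputable def primaryPrefix (L : List (Set Attr × Set Attr))
    (α : DBAtom Rel Attr Var Const) : List (Set Attr × Set Attr) :=
  L.take ((primaryIdx L α).getD L.length)

/-- The primary-lhs positions (attributes) of the atom `α` w.r.t. the chain `L`. -/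
noncomputable def primaryLhs (L : List (Set Attr × Set Attr))
    (α : DBAtom Rel Attr Var Const) : Set Attr :=
  match primaryFD L α with
  | some xy => xy.1
  | none => Set.univ

/-- The variables of `α` occurring at primary-lhs positions. -/
noncomputable def pvar (L : List (Set Attr × Set Attr))
    (α : DBAtom Rel Attr Var Const) : Set Var :=
  {v | ∃ A ∈ primaryLhs L α, α.val A = DBTerm.var v}

/-- A liaison variable of `Q`: a variable with more than one occurrence in `Q`. -/
def liaison (Q : Finset (DBAtom Rel Attr Var Const)) (v : Var) : Prop :=
  ∃ α ∈ Q, ∃ β ∈ Q, ∃ A B, α.val A = DBTerm.var v ∧ β.val B = DBTerm.var v ∧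
    (α ≠ β ∨ A ≠ B)

/-- The complex part `comp(Q,Σ)` of `Q` w.r.t. the chain. -/
noncomputable def compPart (chain : Rel → List (Set Attr × Set Attr))
    (Q : Finset (DBAtom Rel Attr Var Const)) : Finset (DBAtom Rel Attr Var Const) :=
  Q.filter fun α => ∃ A, A ∉ primaryLhs (chain α.rel) α ∧
    ((∃ c, α.val A = DBTerm.const c) ∨ ∃ v, α.val A = DBTerm.var v ∧ liaison Q v) ∧
    ∀ xy ∈ primaryPrefix (chain α.rel) α, A ∉ xy.1 ∪ xy.2

/-- The fact `f` agrees with the atom `α` at attribute `A`, i.e. `α[A]` is the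
constant `f[A]`. -/
def agreesAt (f : DBFact Rel Attr Const) (α : DBAtom Rel Attr Var Const) (A : Attr) : Prop :=
  α.val A = DBTerm.const (f.val A)

/-- `D_conf^{Σ,Q}`: the facts of `D` conflicting with `Q` via an FD of the primary prefix. -/
noncomputable def dconf (chain : Rel → List (Set Attr × Set Attr))
    (Q : Finset (DBAtom Rel Attr Var Const)) (D : Finset (DBFact Rel Attr Const)) :
    Finset (DBFact Rel Attr Const) :=
  D.filter fun f => ∃ α ∈ Q, α.rel = f.rel ∧
    ∃ xy ∈ primaryPrefix (chain α.rel) α,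
      (∀ A ∈ xy.1, agreesAt f α A) ∧ ∃ B ∈ xy.2, ¬ agreesAt f α B

/-- `D_ind^{Σ,Q}`: the facts of `D \ D_conf^{Σ,Q}` disagreeing with `Q` on the lhs of an
FD of the primary prefix. -/
noncomputable def dind (chain : Rel → List (Set Attr × Set Attr))
    (Q : Finset (DBAtom Rel Attr Var Const)) (D : Finset (DBFact Rel Attr Const)) :
    Finset (DBFact Rel Attr Const) :=
  (D \ dconf chain Q D).filter fun f => ∃ α ∈ Q, α.rel = f.rel ∧
    ∃ xy ∈ primaryPrefix (chain α.rel) α, ∃ A ∈ xy.1, ¬ agreesAt f α A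

/-- The active domain of `D`: the constants occurring in `D`. -/
noncomputable def adom [Fintype Attr] (D : Finset (DBFact Rel Attr Const)) : Finset Const :=
  D.biUnion fun f => Finset.univ.image f.val

/-- Substituting a constant for a variable in a term. -/
noncomputable def substTerm (x : Var) (c : Const) : DBTerm Var Const → DBTerm Var Const
  | DBTerm.var v => if v = x then DBTerm.const c else DBTerm.var v
  | DBTerm.const d => DBTerm.const d

/-- Substituting a constant for a variable in an atom. -/
noncomputable def substAtom (x : Var) (c : Const) (α : DBAtom Rel Attr Var Const) :
    DBAtom Rel Attr Var Const :=
  ⟨α.rel, fun A => substTerm x c (α.val A)⟩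

/-- `Q_{x↦c}`: the query obtained from `Q` by replacing the variable `x` with `c`. -/
noncomputable def substQ (x : Var) (c : Const) (Q : Finset (DBAtom Rel Attr Var Const)) :
    Finset (DBAtom Rel Attr Var Const) :=
  Q.image (substAtom x c)

/-- The variables occurring in `Q`. -/
def qvars (Q : Finset (DBAtom Rel Attr Var Const)) : Set Var :=
  {v | ∃ α ∈ Q, ∃ A, α.val A = DBTerm.var v}

/-- `S` has an LHS chain: the left-hand sides of FDs over the same relation are
⊆-comparable. -/
def hasLHSChain (S : Set (DBFD Rel Attr)) : Prop :=
  ∀ φ ∈ S, ∀ ψ ∈ S, φ.rel = ψ.rel → φ.lhs ⊆ ψ.lhs ∨ ψ.lhs ⊆ φ.lhs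


/-- The four attributes (Var, VValue, Clause, LValue) of the relation name `R`. -/
inductive Attr4 where
  | Var | VValue | Clause | LValue
deriving DecidableEq

instance : Fintype Attr4 :=
  ⟨{Attr4.Var, Attr4.VValue, Attr4.Clause, Attr4.LValue}, by intro a; cases a <;> simp⟩

/-- The constants used by the database `db_k(φ)`: the variables of `φ`, the two truth
values, the clause-copy identifiers `⟨C_i^j, b⟩`, and the fresh constant `⋆`. -/
inductive GConst (n m k : ℕ) where
  | var : Fin n → GConst n m k
  | bit : Bool → GConst n m k
  | clid : Fin m → Fin k → Bool → GConst n m k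
  | star : GConst n m k

/-- A literal is a pair (variable, polarity); `lval ℓ v` is the truth value of `ℓ` when
its variable is assigned `v`. -/
def lval {n : ℕ} (ℓ : Fin n × Bool) (v : Bool) : Bool :=
  if ℓ.2 then v else !v

/-- The FD set `Σ = {R : Var → VValue, R : Clause → LValue}` over the single 4-ary
relation name. -/
def sigmaGap : Set (DBFD Unit Attr4) :=
  {⟨(), {Attr4.Var}, {Attr4.VValue}⟩, ⟨(), {Attr4.Clause}, {Attr4.LValue}⟩}

/-- The database `db_k(φ)` for the 3CNF formula `φ` with clauses
`C i = ℓ¹ ∨ ℓ² ∨ ℓ³` given by `C : Fin m → Fin 3 → Fin n × Bool`. -/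
noncomputable def dbk (n m k : ℕ) (C : Fin m → Fin 3 → Fin n × Bool) :
    Finset (DBFact Unit Attr4 (GConst n m k)) :=
  ((Finset.univ : Finset (Fin m × Fin k × Fin 3 × Bool)).image fun q =>
    ⟨(), fun A => match A with
      | Attr4.Var => GConst.var (C q.1 q.2.2.1).1
      | Attr4.VValue => GConst.bit q.2.2.2
      | Attr4.Clause => GConst.clid q.1 q.2.1 (lval (C q.1 q.2.2.1) q.2.2.2)
      | Attr4.LValue => GConst.bit (lval (C q.1 q.2.2.1) q.2.2.2)⟩) ∪
  ((Finset.univ : Finset (Fin m × Fin k)).image fun q =>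
    ⟨(), fun A => match A with
      | Attr4.Var => GConst.star
      | Attr4.VValue => GConst.star
      | Attr4.Clause => GConst.clid q.1 q.2 true
      | Attr4.LValue => GConst.bit false⟩)

/-- Clause `i` of the formula is true under the truth assignment `τ`. -/
def clauseTrue {n m : ℕ} (C : Fin m → Fin 3 → Fin n × Bool) (τ : Fin n → Bool)
    (i : Fin m) : Prop :=
  ∃ p : Fin 3, lval (C i p) (τ (C i p).1) = true

/-! ### Auxiliary development -/

section AuxDev

open Finset

/-- Extensionality for facts over `Unit` relation names. -/
lemma fact_ext {Attr K : Type*} {f g : DBFact Unit Attr K}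
    (h : ∀ A, f.val A = g.val A) : f = g := by
  obtain ⟨fr, fv⟩ := f
  obtain ⟨gr, gv⟩ := g
  simp only [DBFact.mk.injEq]
  exact ⟨trivial, funext h⟩

/-- Every consistent subset of `D` extends to a repair. -/
lemma exists_repair_superset {Rel Attr Const : Type*} (S : Set (DBFD Rel Attr))
    (D E : Finset (DBFact Rel Attr Const)) (hED : E ⊆ D) (hE : satFDs E S) :
    ∃ F, E ⊆ F ∧ F ∈ rep D S := by
  classical
  have hne : (D.powerset.filter fun F => E ⊆ F ∧ satFDs F S).Nonempty :=
    ⟨E, by simp [Finset.mem_filter, Finset.mem_powerset, hED, hE]⟩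
  obtain ⟨M, hMm⟩ := Finset.exists_maximal hne
  obtain ⟨hM, hmax⟩ : M ∈ D.powerset.filter (fun F => E ⊆ F ∧ satFDs F S) ∧
      ∀ x ∈ D.powerset.filter (fun F => E ⊆ F ∧ satFDs F S), ¬ M < x :=
    ⟨hMm.prop, fun x hx hlt => lt_irrefl _ (lt_of_lt_of_le hlt (hMm.2 hx hlt.le))⟩
  simp only [Finset.mem_filter, Finset.mem_powerset] at hM
  refine ⟨M, hM.2.1, ?_⟩
  unfold rep; rw [Finset.mem_filter, Finset.mem_powerset]
  refine ⟨hM.1, hM.1, hM.2.2, fun F hMF hFD hFS => ?_⟩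
  by_contra hne'
  exact hmax F
    (by simp only [Finset.mem_filter, Finset.mem_powerset]; exact ⟨hFD, hM.2.1.trans hMF, hFS⟩)
    (Finset.ssubset_iff_subset_ne.mpr ⟨hMF, Ne.symm hne'⟩)

lemma satFDs_sigmaGap_iff {K : Type*} {E : Finset (DBFact Unit Attr4 K)} :
    satFDs E sigmaGap ↔
      ((∀ f ∈ E, ∀ g ∈ E, f.val Attr4.Var = g.val Attr4.Var →
          f.val Attr4.VValue = g.val Attr4.VValue) ∧
       (∀ f ∈ E, ∀ g ∈ E, f.val Attr4.Clause = g.val Attr4.Clause →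
          f.val Attr4.LValue = g.val Attr4.LValue)) := by
  constructor
  · intro h
    constructor
    · intro f hf g hg hA
      exact h ⟨(), {Attr4.Var}, {Attr4.VValue}⟩ (Or.inl rfl) f hf g hg rfl rfl
        (fun A hA' => by rw [Set.mem_singleton_iff] at hA'; subst hA'; exact hA)
        Attr4.VValue rfl
    · intro f hf g hg hA
      exact h ⟨(), {Attr4.Clause}, {Attr4.LValue}⟩ (Or.inr rfl) f hf g hg rfl rfl
        (fun A hA' => by rw [Set.mem_singleton_iff] at hA'; subst hA'; exact hA)
        Attr4.LValue rfl
  · rintro ⟨h1, h2⟩ φ hφ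
    rcases hφ with hφ | hφ <;> subst hφ
    · intro f hf g hg _ _ hlhs A hA
      rw [Set.mem_singleton_iff] at hA; subst hA
      exact h1 f hf g hg (hlhs Attr4.Var rfl)
    · intro f hf g hg _ _ hlhs A hA
      rw [Set.mem_singleton_iff] at hA; subst hA
      exact h2 f hf g hg (hlhs Attr4.Clause rfl)

variable {n m k : ℕ}

/-- The literal fact `R(var(ℓ), v, ⟨C_i^j, lval(ℓ,v)⟩, lval(ℓ,v))`. -/
def litFact (C : Fin m → Fin 3 → Fin n × Bool) {k : ℕ} (i : Fin m) (j : Fin k) (p : Fin 3)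
    (v : Bool) : DBFact Unit Attr4 (GConst n m k) :=
  ⟨(), fun A => match A with
    | Attr4.Var => GConst.var (C i p).1
    | Attr4.VValue => GConst.bit v
    | Attr4.Clause => GConst.clid i j (lval (C i p) v)
    | Attr4.LValue => GConst.bit (lval (C i p) v)⟩

/-- The star fact `R(⋆, ⋆, ⟨C_i^j, 1⟩, 0)`. -/
def starFact (i : Fin m) (j : Fin k) : DBFact Unit Attr4 (GConst n m k) :=
  ⟨(), fun A => match A with
    | Attr4.Var => GConst.star
    | Attr4.VValue => GConst.star
    | Attr4.Clause => GConst.clid i j true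
    | Attr4.LValue => GConst.bit false⟩

variable {C : Fin m → Fin 3 → Fin n × Bool}

@[simp] lemma litFact_var {i j p v} :
    (litFact C (k := k) i j p v).val Attr4.Var = GConst.var (C i p).1 := rfl
@[simp] lemma litFact_vvalue {i j p v} :
    (litFact C (k := k) i j p v).val Attr4.VValue = GConst.bit v := rfl
@[simp] lemma litFact_clause {i j p v} :
    (litFact C (k := k) i j p v).val Attr4.Clause = GConst.clid i j (lval (C i p) v) := rfl
@[simp] lemma litFact_lvalue {i j p v} :
    (litFact C (k := k) i j p v).val Attr4.LValue = GConst.bit (lval (C i p) v) := rfl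
@[simp] lemma starFact_var {i : Fin m} {j : Fin k} :
    (starFact (n := n) i j).val Attr4.Var = GConst.star := rfl
@[simp] lemma starFact_vvalue {i : Fin m} {j : Fin k} :
    (starFact (n := n) i j).val Attr4.VValue = GConst.star := rfl
@[simp] lemma starFact_clause {i : Fin m} {j : Fin k} :
    (starFact (n := n) i j).val Attr4.Clause = GConst.clid i j true := rfl
@[simp] lemma starFact_lvalue {i : Fin m} {j : Fin k} :
    (starFact (n := n) i j).val Attr4.LValue = GConst.bit false := rfl

lemma mem_dbk {f : DBFact Unit Attr4 (GConst n m k)} :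
    f ∈ dbk n m k C ↔
      (∃ i j p v, f = litFact C i j p v) ∨ ∃ i j, f = starFact i j := by
  unfold dbk
  simp only [Finset.mem_union, Finset.mem_image, Finset.mem_univ, true_and]
  constructor
  · rintro (⟨⟨i, j, p, v⟩, h⟩ | ⟨⟨i, j⟩, h⟩)
    · exact Or.inl ⟨i, j, p, v, h.symm⟩
    · exact Or.inr ⟨i, j, h.symm⟩
  · rintro (⟨i, j, p, v, rfl⟩ | ⟨i, j, rfl⟩)
    · exact Or.inl ⟨⟨i, j, p, v⟩, rfl⟩
    · exact Or.inr ⟨⟨i, j⟩, rfl⟩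

lemma litFact_mem_dbk {i j p v} : litFact C (k := k) i j p v ∈ dbk n m k C :=
  mem_dbk.mpr (Or.inl ⟨i, j, p, v, rfl⟩)

lemma starFact_mem_dbk {i : Fin m} {j : Fin k} : starFact (n := n) i j ∈ dbk n m k C :=
  mem_dbk.mpr (Or.inr ⟨i, j, rfl⟩)

lemma lit_ne_star {i j p v} {i' : Fin m} {j' : Fin k} :
    litFact C i j p v ≠ starFact (n := n) i' j' := by
  intro h
  have := congrArg (fun f => f.val Attr4.Var) h
  simp at this

/-- FD `Var → VValue` holds for subsets of `dbk` whose literal facts follow a single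
assignment. -/
lemma fd1_of {E : Finset (DBFact Unit Attr4 (GConst n m k))} (hE : E ⊆ dbk n m k C)
    (τ : Fin n → Bool) (h : ∀ i j p v, litFact C i j p v ∈ E → v = τ (C i p).1) :
    ∀ f ∈ E, ∀ g ∈ E, f.val Attr4.Var = g.val Attr4.Var →
      f.val Attr4.VValue = g.val Attr4.VValue := by
  intro f hf g hg hA
  rcases mem_dbk.mp (hE hf) with ⟨i, j, p, v, rfl⟩ | ⟨i, j, rfl⟩ <;>
    rcases mem_dbk.mp (hE hg) with ⟨i', j', p', v', rfl⟩ | ⟨i', j', rfl⟩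
  · simp only [litFact_var, GConst.var.injEq] at hA
    simp only [litFact_vvalue, GConst.bit.injEq]
    rw [h i j p v hf, h i' j' p' v' hg, hA]
  · simp at hA
  · simp at hA
  · rfl

/-- FD `Clause → LValue` holds for subsets of `dbk` with no star/true-literal conflict. -/
lemma fd2_of {E : Finset (DBFact Unit Attr4 (GConst n m k))} (hE : E ⊆ dbk n m k C)
    (h : ∀ i j p v, litFact C i j p v ∈ E → lval (C i p) v = true →
      starFact (n := n) i j ∉ E) :
    ∀ f ∈ E, ∀ g ∈ E, f.val Attr4.Clause = g.val Attr4.Clause →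
      f.val Attr4.LValue = g.val Attr4.LValue := by
  intro f hf g hg hA
  rcases mem_dbk.mp (hE hf) with ⟨i, j, p, v, rfl⟩ | ⟨i, j, rfl⟩ <;>
    rcases mem_dbk.mp (hE hg) with ⟨i', j', p', v', rfl⟩ | ⟨i', j', rfl⟩
  · simp only [litFact_clause, GConst.clid.injEq] at hA
    simp only [litFact_lvalue, GConst.bit.injEq, hA.2.2]
  · simp only [litFact_clause, starFact_clause, GConst.clid.injEq] at hA
    obtain ⟨rfl, rfl, hlv⟩ := hA
    exact absurd hg (h i j p v hf hlv)
  · simp only [litFact_clause, starFact_clause, GConst.clid.injEq] at hA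
    obtain ⟨rfl, rfl, hlv⟩ := hA
    exact absurd hf (h _ _ p' v' hg hlv.symm)
  · rfl

lemma star_lit_conflict {E : Finset (DBFact Unit Attr4 (GConst n m k))}
    (hcons : satFDs E sigmaGap) {i j p v}
    (hl : litFact C i j p v ∈ E) (hv : lval (C i p) v = true) :
    starFact (n := n) i j ∉ E := by
  intro hs
  have h2 := (satFDs_sigmaGap_iff.mp hcons).2
  have := h2 _ hl _ hs (by simp [hv])
  simp [hv] at this

/-- The truth assignment read off from a database. -/
noncomputable def tauE (E : Finset (DBFact Unit Attr4 (GConst n m k))) : Fin n → Bool :=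
  fun x =>
    if ∃ f ∈ E, f.val Attr4.Var = GConst.var x ∧ f.val Attr4.VValue = GConst.bit true
    then true else false

lemma lit_val_eq {E : Finset (DBFact Unit Attr4 (GConst n m k))}
    (hcons : satFDs E sigmaGap) {i j p v} (h : litFact C i j p v ∈ E) :
    v = tauE E (C i p).1 := by
  have h1 := (satFDs_sigmaGap_iff.mp hcons).1
  unfold tauE
  split_ifs with hw
  · obtain ⟨g, hg, hgv, hgb⟩ := hw
    have := h1 _ h _ hg (by rw [litFact_var, hgv])
    rw [litFact_vvalue, hgb] at this
    simpa using this
  · cases v with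
    | false => rfl
    | true => exact absurd ⟨litFact C i j p true, h, rfl, rfl⟩ hw

lemma rep_spec {E : Finset (DBFact Unit Attr4 (GConst n m k))}
    (hE : E ∈ rep (dbk n m k C) sigmaGap) :
    E ⊆ dbk n m k C ∧ satFDs E sigmaGap ∧
      ∀ F, E ⊆ F → F ⊆ dbk n m k C → satFDs F sigmaGap → F = E := by
  unfold rep at hE; rw [Finset.mem_filter, Finset.mem_powerset] at hE; unfold isRepair at hE
  exact ⟨hE.1, hE.2.2.1, hE.2.2.2⟩

lemma mem_of_insert_consistent {E : Finset (DBFact Unit Attr4 (GConst n m k))}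
    {f : DBFact Unit Attr4 (GConst n m k)} (hE : E ∈ rep (dbk n m k C) sigmaGap)
    (hf : f ∈ dbk n m k C) (hcons : satFDs (insert f E) sigmaGap) : f ∈ E := by
  obtain ⟨hsub, _, hmax⟩ := rep_spec hE
  have := hmax (insert f E) (Finset.subset_insert _ _) (Finset.insert_subset hf hsub) hcons
  rw [← this]
  exact Finset.mem_insert_self _ _

lemma lit_mem_char {E : Finset (DBFact Unit Attr4 (GConst n m k))}
    (hE : E ∈ rep (dbk n m k C) sigmaGap) (i : Fin m) (j : Fin k) (p : Fin 3) (v : Bool) :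
    litFact C i j p v ∈ E ↔
      (v = tauE E (C i p).1 ∧ (lval (C i p) v = false ∨ starFact (n := n) i j ∉ E)) := by
  obtain ⟨hsub, hcons, hmax⟩ := rep_spec hE
  constructor
  · intro h
    refine ⟨lit_val_eq hcons h, ?_⟩
    cases hlv : lval (C i p) v with
    | false => exact Or.inl rfl
    | true => exact Or.inr (star_lit_conflict hcons h hlv)
  · rintro ⟨hv, hor⟩
    apply mem_of_insert_consistent hE litFact_mem_dbk
    have hins : insert (litFact C i j p v) E ⊆ dbk n m k C :=
      Finset.insert_subset litFact_mem_dbk hsub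
    rw [satFDs_sigmaGap_iff]
    constructor
    · apply fd1_of hins (tauE E)
      intro i' j' p' v' hmem
      rcases Finset.mem_insert.mp hmem with heq | hmem'
      · have hVar := congrArg (fun f => f.val Attr4.Var) heq
        have hVal := congrArg (fun f => f.val Attr4.VValue) heq
        simp only [litFact_var, litFact_vvalue, GConst.var.injEq, GConst.bit.injEq]
          at hVar hVal
        rw [hVal, hVar]
        exact hv
      · exact lit_val_eq hcons hmem'
    · apply fd2_of hins
      intro i' j' p' v' hmem hlv' hstar
      have hstar' : starFact (n := n) i' j' ∈ E := by
        rcases Finset.mem_insert.mp hstar with heq | h' 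
        · exact absurd heq.symm lit_ne_star
        · exact h'
      rcases Finset.mem_insert.mp hmem with heq | h'
      · have hc := congrArg (fun f => f.val Attr4.Clause) heq
        simp only [litFact_clause, GConst.clid.injEq] at hc
        obtain ⟨h1, h2, h3⟩ := hc
        rw [hlv'] at h3
        rcases hor with hfalse | hnstar
        · rw [← h3] at hfalse
          cases hfalse
        · subst h1; subst h2
          exact hnstar hstar'
      · exact star_lit_conflict hcons h' hlv' hstar'

lemma star_mem_char {E : Finset (DBFact Unit Attr4 (GConst n m k))}
    (hE : E ∈ rep (dbk n m k C) sigmaGap) (i : Fin m) (j : Fin k) :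
    starFact (n := n) i j ∈ E ↔
      ∀ p v, lval (C i p) v = true → litFact C i j p v ∉ E := by
  obtain ⟨hsub, hcons, hmax⟩ := rep_spec hE
  constructor
  · intro hs p v hlv hl
    exact star_lit_conflict hcons hl hlv hs
  · intro h
    apply mem_of_insert_consistent hE starFact_mem_dbk
    have hins : insert (starFact (n := n) i j) E ⊆ dbk n m k C :=
      Finset.insert_subset starFact_mem_dbk hsub
    rw [satFDs_sigmaGap_iff]
    constructor
    · apply fd1_of hins (tauE E)
      intro i' j' p' v' hmem
      rcases Finset.mem_insert.mp hmem with heq | h'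
      · exact absurd heq lit_ne_star
      · exact lit_val_eq hcons h'
    · apply fd2_of hins
      intro i' j' p' v' hmem hlv' hstar
      have hlit : litFact C i' j' p' v' ∈ E := by
        rcases Finset.mem_insert.mp hmem with heq | h'
        · exact absurd heq lit_ne_star
        · exact h'
      rcases Finset.mem_insert.mp hstar with heq | h'
      · have hc := congrArg (fun f => f.val Attr4.Clause) heq
        simp only [starFact_clause, GConst.clid.injEq] at hc
        obtain ⟨rfl, rfl, -⟩ := hc
        exact h p' v' hlv' hlit
      · exact star_lit_conflict hcons hlit hlv' h'

lemma star_forced {E : Finset (DBFact Unit Attr4 (GConst n m k))}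
    (hE : E ∈ rep (dbk n m k C) sigmaGap) (i : Fin m) (j : Fin k)
    (hf : ¬ clauseTrue C (tauE E) i) : starFact (n := n) i j ∈ E := by
  rw [star_mem_char hE]
  intro p v hlv hl
  have hv := lit_val_eq (rep_spec hE).2.1 hl
  exact hf ⟨p, by rw [← hv]; exact hlv⟩

lemma repair_subset_of {E E' : Finset (DBFact Unit Attr4 (GConst n m k))}
    (hE : E ∈ rep (dbk n m k C) sigmaGap) (hE' : E' ∈ rep (dbk n m k C) sigmaGap)
    (hτ : tauE E = tauE E')
    (hstar : ∀ i j, starFact (n := n) i j ∈ E ↔ starFact (n := n) i j ∈ E') :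
    E ⊆ E' := by
  intro f hf
  rcases mem_dbk.mp ((rep_spec hE).1 hf) with ⟨i, j, p, v, rfl⟩ | ⟨i, j, rfl⟩
  · obtain ⟨h1, h2⟩ := (lit_mem_char hE i j p v).mp hf
    refine (lit_mem_char hE' i j p v).mpr ⟨by rw [← hτ]; exact h1, ?_⟩
    rcases h2 with h | h
    · exact Or.inl h
    · exact Or.inr fun hs => h ((hstar i j).mpr hs)
  · exact (hstar i j).mp hf

lemma repair_eq {E E' : Finset (DBFact Unit Attr4 (GConst n m k))}
    (hE : E ∈ rep (dbk n m k C) sigmaGap) (hE' : E' ∈ rep (dbk n m k C) sigmaGap)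
    (hτ : tauE E = tauE E')
    (hstar : ∀ i j, starFact (n := n) i j ∈ E ↔ starFact (n := n) i j ∈ E') :
    E = E' :=
  Finset.Subset.antisymm (repair_subset_of hE hE' hτ hstar)
    (repair_subset_of hE' hE hτ.symm fun i j => (hstar i j).symm)

end AuxDev

section MainDev

open Finset

variable {n m k : ℕ} {C : Fin m → Fin 3 → Fin n × Bool}

/-- The candidate consistent subset determined by assignment `τ` and star-choice `s`. -/
noncomputable def especc (C : Fin m → Fin 3 → Fin n × Bool) (k : ℕ) (τ : Fin n → Bool)
    (s : Fin m → Fin k → Bool) : Finset (DBFact Unit Attr4 (GConst n m k)) :=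
  (dbk n m k C).filter fun f =>
    (∃ i j p, f = litFact C i j p (τ (C i p).1) ∧
      (lval (C i p) (τ (C i p).1) = false ∨ s i j = true)) ∨
    (∃ i j, f = starFact i j ∧ s i j = false)

lemma especc_cons (τ : Fin n → Bool) (s : Fin m → Fin k → Bool) :
    satFDs (especc C k τ s) sigmaGap := by
  rw [satFDs_sigmaGap_iff]
  refine ⟨fd1_of (Finset.filter_subset _ _) τ ?_, fd2_of (Finset.filter_subset _ _) ?_⟩
  · intro i j p v hmem
    rcases (Finset.mem_filter.mp hmem).2 with ⟨i', j', p', heq, -⟩ | ⟨i', j', heq, -⟩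
    · have hVar := congrArg (fun f => f.val Attr4.Var) heq
      have hVal := congrArg (fun f => f.val Attr4.VValue) heq
      simp only [litFact_var, litFact_vvalue, GConst.var.injEq, GConst.bit.injEq]
        at hVar hVal
      rw [hVal, hVar]
    · exact absurd heq lit_ne_star
  · intro i j p v hl hlv hs
    obtain ⟨-, hs2⟩ := Finset.mem_filter.mp hs
    obtain ⟨-, hl2⟩ := Finset.mem_filter.mp hl
    rcases hs2 with ⟨i', j', p', heq, -⟩ | ⟨i', j', heq, hsf⟩
    · exact absurd heq.symm lit_ne_star
    · have hc := congrArg (fun f => f.val Attr4.Clause) heq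
      simp only [starFact_clause, GConst.clid.injEq, eq_self_iff_true, and_true] at hc
      obtain ⟨rfl, rfl⟩ := hc
      rcases hl2 with ⟨i2, j2, p2, heq2, hor2⟩ | ⟨i2, j2, heq2, -⟩
      · have hc2 := congrArg (fun f => f.val Attr4.Clause) heq2
        simp only [litFact_clause, GConst.clid.injEq] at hc2
        obtain ⟨rfl, rfl, hlv2⟩ := hc2
        rcases hor2 with hf2 | hst2
        · rw [hlv2, hf2] at hlv
          cases hlv
        · rw [hst2] at hsf
          cases hsf
      · exact absurd heq2 lit_ne_star

/-- Lower bound: a satisfying assignment yields `2^(k·m)` repairs. -/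
lemma lower_bound (τ : Fin n → Bool) (hτ : ∀ i, clauseTrue C τ i) :
    2 ^ (k * m) ≤ (rep (dbk n m k C) sigmaGap).card := by
  classical
  have hext : ∀ s : Fin m → Fin k → Bool, ∃ F,
      especc C k τ s ⊆ F ∧ F ∈ rep (dbk n m k C) sigmaGap :=
    fun s => exists_repair_superset _ _ _ (Finset.filter_subset _ _) (especc_cons τ s)
  choose R hR1 hR2 using hext
  have hstarR : ∀ s i j, (starFact (n := n) i j ∈ R s ↔ s i j = false) := by
    intro s i j
    constructor
    · intro hs
      by_contra hne
      rw [Bool.not_eq_false] at hne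
      obtain ⟨p, hp⟩ := hτ i
      have hlit : litFact C i j p (τ (C i p).1) ∈ R s :=
        hR1 s (Finset.mem_filter.mpr ⟨litFact_mem_dbk, Or.inl ⟨i, j, p, rfl, Or.inr hne⟩⟩)
      exact star_lit_conflict (rep_spec (hR2 s)).2.1 hlit hp hs
    · intro hfalse
      exact hR1 s (Finset.mem_filter.mpr ⟨starFact_mem_dbk, Or.inr ⟨i, j, rfl, hfalse⟩⟩)
  have hinj : Set.InjOn R (Finset.univ : Finset (Fin m → Fin k → Bool)) := by
    intro s _ s' _ h
    funext i j
    have h1 := hstarR s i j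
    rw [h] at h1
    have h2 := h1.symm.trans (hstarR s' i j)
    cases hb : s i j <;> cases hb' : s' i j <;> simp_all
  have hle := Finset.card_le_card_of_injOn R (fun s _ => hR2 s) hinj
  have hcard : (Finset.univ : Finset (Fin m → Fin k → Bool)).card = 2 ^ (k * m) := by
    rw [Finset.card_univ, Fintype.card_fun, Fintype.card_fun, Fintype.card_bool,
      Fintype.card_fin, Fintype.card_fin, ← pow_mul]
  rw [← hcard]
  exact hle

/-- Per-assignment fiber bound. -/
lemma fiber_card_le (τ : Fin n → Bool) :
    ((rep (dbk n m k C) sigmaGap).filter fun E => tauE E = τ).card ≤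
      2 ^ ((Finset.univ.filter fun i => clauseTrue C τ i).card * k) := by
  classical
  set T := (Finset.univ.filter fun i => clauseTrue C τ i) with hT
  have h := Finset.card_le_card_of_injOn
    (f := fun E => (T ×ˢ (Finset.univ : Finset (Fin k))).filter
      fun q : Fin m × Fin k => starFact (n := n) q.1 q.2 ∉ E)
    (s := (rep (dbk n m k C) sigmaGap).filter fun E => tauE E = τ)
    (t := (T ×ˢ (Finset.univ : Finset (Fin k))).powerset)
    (fun E _ => Finset.mem_powerset.mpr (Finset.filter_subset _ _)) ?_
  · calc ((rep (dbk n m k C) sigmaGap).filter fun E => tauE E = τ).card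
        ≤ (T ×ˢ (Finset.univ : Finset (Fin k))).powerset.card := h
      _ = 2 ^ (T ×ˢ (Finset.univ : Finset (Fin k))).card := Finset.card_powerset _
      _ = 2 ^ (T.card * k) := by
          rw [Finset.card_product, Finset.card_univ, Fintype.card_fin]
  · intro E hEmem E' hEmem' heq
    simp only [Finset.coe_filter, Set.mem_setOf_eq] at hEmem hEmem'
    refine repair_eq hEmem.1 hEmem'.1 (by rw [hEmem.2, hEmem'.2]) ?_
    intro i j
    by_cases hc : clauseTrue C τ i
    · have hq : ((i, j) ∈ (T ×ˢ (Finset.univ : Finset (Fin k))).filter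
          (fun q : Fin m × Fin k => starFact (n := n) q.1 q.2 ∉ E))
          ↔ ((i, j) ∈ (T ×ˢ (Finset.univ : Finset (Fin k))).filter
          (fun q : Fin m × Fin k => starFact (n := n) q.1 q.2 ∉ E')) := by
        have heq2 : ((T ×ˢ (Finset.univ : Finset (Fin k))).filter
            (fun q : Fin m × Fin k => starFact (n := n) q.1 q.2 ∉ E)) =
            ((T ×ˢ (Finset.univ : Finset (Fin k))).filter
            (fun q : Fin m × Fin k => starFact (n := n) q.1 q.2 ∉ E')) := heq
        rw [heq2]
      simp only [Finset.mem_filter, Finset.mem_product, Finset.mem_univ, and_true, hT,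
        Finset.mem_filter, hc, true_and] at hq
      exact not_iff_not.mp hq
    · have f1 := star_forced hEmem.1 i j (by rw [hEmem.2]; exact hc)
      have f2 := star_forced hEmem'.1 i j (by rw [hEmem'.2]; exact hc)
      exact iff_of_true f1 f2

/-- Upper bound. -/
lemma upper_bound (γ : ℚ)
    (hub : ∀ τ : Fin n → Bool,
      ((Finset.univ.filter fun i => clauseTrue C τ i).card : ℝ) ≤ (7/8 + (γ : ℝ)) * m)
    (hγ0 : 0 < γ) :
    ((rep (dbk n m k C) sigmaGap).card : ℝ) ≤
      2 ^ n * (2 : ℝ) ^ ((7/8 + (γ : ℝ)) * k * m) := by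
  classical
  have hsum := Finset.card_eq_sum_card_fiberwise
    (f := fun E => tauE E) (s := rep (dbk n m k C) sigmaGap)
    (t := (Finset.univ : Finset (Fin n → Bool))) (fun E _ => Finset.mem_univ _)
  set B : ℝ := (2 : ℝ) ^ ((7/8 + (γ : ℝ)) * k * m) with hB
  have hfibR : ∀ τ : Fin n → Bool,
      (((rep (dbk n m k C) sigmaGap).filter fun E => tauE E = τ).card : ℝ) ≤ B := by
    intro τ
    have h1 := fiber_card_le (C := C) (k := k) τ
    set t := (Finset.univ.filter fun i => clauseTrue C τ i).card with ht
    have h2 : ((2 ^ (t * k) : ℕ) : ℝ) ≤ B := by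
      push_cast
      rw [hB, ← Real.rpow_natCast 2 (t * k)]
      apply Real.rpow_le_rpow_of_exponent_le one_le_two
      push_cast
      calc ((t : ℝ) * k) ≤ ((7/8 + (γ : ℝ)) * m) * k :=
            mul_le_mul_of_nonneg_right (hub τ) (by positivity)
        _ = (7/8 + (γ : ℝ)) * k * m := by ring
    calc (((rep (dbk n m k C) sigmaGap).filter fun E => tauE E = τ).card : ℝ)
        ≤ ((2 ^ (t * k) : ℕ) : ℝ) := by exact_mod_cast h1
      _ ≤ B := h2
  have hsumR : ((rep (dbk n m k C) sigmaGap).card : ℝ) =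
      ∑ τ : Fin n → Bool,
        (((rep (dbk n m k C) sigmaGap).filter fun E => tauE E = τ).card : ℝ) := by
    rw [hsum]
    push_cast
    rfl
  have hcardn : ((Finset.univ : Finset (Fin n → Bool)).card : ℝ) = 2 ^ n := by
    rw [Finset.card_univ, Fintype.card_fun, Fintype.card_bool, Fintype.card_fin]
    push_cast
    ring
  calc ((rep (dbk n m k C) sigmaGap).card : ℝ)
      = ∑ τ : Fin n → Bool,
        (((rep (dbk n m k C) sigmaGap).filter fun E => tauE E = τ).card : ℝ) := hsumR
    _ ≤ ∑ _τ : Fin n → Bool, B := Finset.sum_le_sum (fun τ _ => hfibR τ)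
    _ = ((Finset.univ : Finset (Fin n → Bool)).card : ℝ) * B := by
        rw [Finset.sum_const, nsmul_eq_mul]
    _ = 2 ^ n * B := by rw [hcardn]

end MainDev

/-- Bounds lemma: for a 3CNF formula `φ` with `n > 0` variables and `m > 0` clauses
(each clause having three literals over pairwise distinct variables), `k > 0` and
`γ ∈ (0,1/8)`: (1) if `φ` is satisfiable then `|rep(db_k(φ),Σ)| ≥ 2^{k·m}`; (2) if
every truth assignment makes at most `(7/8 + γ)·m` clauses true, then
`|rep(db_k(φ),Σ)| ≤ 2^n · 2^{(7/8 + γ)·k·m}`. -/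
theorem stmt_15 (n m k : ℕ) (hn : 0 < n) (hm : 0 < m) (hk : 0 < k)
    (C : Fin m → Fin 3 → Fin n × Bool)
    (hdistinct : ∀ i : Fin m, Function.Injective fun p => (C i p).1)
    (γ : ℚ) (hγ0 : 0 < γ) (hγ : γ < 1/8) :
    ((∃ τ : Fin n → Bool, ∀ i, clauseTrue C τ i) →
      2 ^ (k * m) ≤ (rep (dbk n m k C) sigmaGap).card) ∧
    ((∀ τ : Fin n → Bool,
        ((Finset.univ.filter fun i => clauseTrue C τ i).card : ℝ) ≤ (7/8 + (γ : ℝ)) * m) →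
      ((rep (dbk n m k C) sigmaGap).card : ℝ) ≤
        2 ^ n * (2 : ℝ) ^ ((7/8 + (γ : ℝ)) * k * m)) := by
  constructor
  · rintro ⟨τ, hτ⟩
    exact lower_bound τ hτ
  · intro hub
    exact upper_bound γ hub hγ0
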